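/- Let φ be an automorphism of a free group F with basis X, and let C be a bounded cancellation constant for φ. Suppose w ∈ F and k ≥ 0 are such that φ^k(w) contains (as a subword of its reduced form) a subword β with |φ(β)| ≥ λ|β| for some λ > 1 (and this property persists under iteration, i.e., every φ^j_#-image of β lies in a λ-expanding set) and |β| > 2C/(λ−1). Then |φ^{k+m}(w)| ≥ λ^m(|β| − 2C/(λ−1)) for all m ≥ 0; in particular |φ^n(w)| → ∞ exponentially. -/

import Mathlib

open Filter

/-- Reduced word length of an element of a free group. -/
def wordLen {α : Type*} [DecidableEq α] (w : FreeGroup α) : ℕ :=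
  (FreeGroup.toWord w).length

/-- `m` occurs as a subword of the reduced word `w` (a splitting with no cancellation). -/
def IsSubword {α : Type*} [DecidableEq α] (m w : FreeGroup α) : Prop :=
  ∃ u v : FreeGroup α, w = u * m * v ∧
    wordLen w = wordLen u + wordLen m + wordLen v

/-!
Write the reduced splitting as `W = u β v`. Bounded cancellation lets `φ β` lose at most `C / 2`
letters at each end against `φ u` and `φ v`, so once `|φ β| ≥ C` the middle of `φ β` survives
as a subword of `φ W`; by closure it lies in `S`, and it has length at least `λ |β| - C`.
Iterating, the surviving lengths obey `x (m + 1) ≥ λ x m - C`, whose fixed point `C / (λ - 1)`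
lies below `2 C / (λ - 1)`, so `x m - C / (λ - 1)` grows like `λ ^ m`.
-/

theorem List.exists_eq_append_of_append_eq_append {γ : Type*} {p q P t : List γ}
    (h : p ++ q = P ++ t) (ht : t.length ≤ q.length) : ∃ m, q = m ++ t ∧ P = p ++ m := by
  rcases List.append_eq_append_iff.mp h with ⟨m, hP, hq⟩ | ⟨c, rfl, rfl⟩
  · exact ⟨m, hq, hP⟩
  · obtain rfl : c = [] := List.eq_nil_of_length_eq_zero (by rw [List.length_append] at ht; omega)
    exact ⟨[], by simp, by simp⟩

namespace FreeGroup

variable {α : Type*} [DecidableEq α]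

theorem IsReduced.exists_reduce_append {a b : List (α × Bool)} (ha : IsReduced a)
    (hb : IsReduced b) :
    ∃ p t q, a = p ++ t ∧ b = invRev t ++ q ∧ reduce (a ++ b) = p ++ q := by
  induction b generalizing a with
  | nil => exact ⟨a, [], [], by simp, by simp [invRev], by simpa using ha.reduce_eq⟩
  | cons e b ih =>
    rcases List.eq_nil_or_concat a with rfl | ⟨a, x, rfl⟩
    · exact ⟨[], [], e :: b, by simp, by simp [invRev], by simpa using hb.reduce_eq⟩
    rw [List.concat_eq_append] at ha ⊢
    by_cases hx : x = (e.1, !e.2)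
    · subst hx
      obtain ⟨p, t, q, rfl, rfl, hpq⟩ :=
        ih (a := a) (ha.infix ⟨[], [(e.1, !e.2)], by simp⟩) (hb.infix ⟨[e], [], by simp⟩)
      refine ⟨p, t ++ [(e.1, !e.2)], q, by simp, by simp [invRev], ?_⟩
      rw [← hpq]
      exact reduce.Step.eq (by simpa using Red.Step.not_rev (L₁ := p ++ t) (x := e.1) (b := e.2))
    · have hxe : IsReduced ([x] ++ e :: b) := by
        refine isReduced_cons_cons.mpr ⟨fun h1 => ?_, hb⟩
        by_contra h2
        exact hx (Prod.ext h1 (Bool.eq_not_iff.mpr h2))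
      exact ⟨a ++ [x], [], e :: b, by simp, by simp [invRev],
        (ha.append_overlap hxe (by simp)).reduce_eq⟩

theorem exists_toWord_mul (x y : FreeGroup α) :
    ∃ p t q, x.toWord = p ++ t ∧ y.toWord = invRev t ++ q ∧ (x * y).toWord = p ++ q := by
  rw [toWord_mul]
  exact isReduced_toWord.exists_reduce_append isReduced_toWord

end FreeGroup

section WordLength

open FreeGroup

variable {α : Type*} [DecidableEq α]

theorem wordLen_mul_le (x y : FreeGroup α) : wordLen (x * y) ≤ wordLen x + wordLen y :=
  norm_mul_le x y

theorem wordLen_mk_of_infix {L : List (α × Bool)} {x : FreeGroup α} (h : L <:+: x.toWord) :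
    wordLen (mk L) = L.length := by
  rw [wordLen, toWord_mk, (isReduced_toWord.infix h).reduce_eq]

theorem exists_toWord_mul_of_add_le {x y : FreeGroup α} {C : ℕ}
    (h : wordLen x + wordLen y ≤ wordLen (x * y) + C) :
    ∃ p t q, x.toWord = p ++ t ∧ y.toWord = invRev t ++ q ∧ (x * y).toWord = p ++ q ∧
      2 * t.length ≤ C := by
  obtain ⟨p, t, q, hx, hy, hxy⟩ := exists_toWord_mul x y
  refine ⟨p, t, q, hx, hy, hxy, ?_⟩
  simp only [wordLen, hx, hy, hxy, List.length_append, invRev_length] at h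
  omega

section Splitting

variable {W : FreeGroup α} {a m b : List (α × Bool)}

theorem eq_mk_mul_mk_mul_mk_of_toWord_eq (h : W.toWord = a ++ m ++ b) :
    W = mk a * mk m * mk b := by
  rw [mul_mk, mul_mk, ← h, mk_toWord]

theorem wordLen_eq_of_toWord_eq (h : W.toWord = a ++ m ++ b) :
    wordLen W = wordLen (mk a) + wordLen (mk m) + wordLen (mk b) := by
  rw [wordLen_mk_of_infix (x := W) ⟨[], m ++ b, by simp [h]⟩,
    wordLen_mk_of_infix (x := W) ⟨a, b, h.symm⟩,
    wordLen_mk_of_infix (x := W) ⟨a ++ m, [], by simp [h]⟩, wordLen, h]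
  simp [Nat.add_assoc]

theorem isSubword_mk_of_toWord_eq (h : W.toWord = a ++ m ++ b) : IsSubword (mk m) W :=
  ⟨_, _, eq_mk_mul_mk_mul_mk_of_toWord_eq h, wordLen_eq_of_toWord_eq h⟩

end Splitting

theorem IsSubword.wordLen_le {s W : FreeGroup α} (h : IsSubword s W) : wordLen s ≤ wordLen W := by
  obtain ⟨u, v, -, hlen⟩ := h
  omega

variable {β F : Type*} [DecidableEq β] [FunLike F (FreeGroup α) (FreeGroup β)]
  [MonoidHomClass F (FreeGroup α) (FreeGroup β)]

theorem IsSubword.exists_middle_map (f : F) {C : ℕ}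
    (hbc : ∀ u v : FreeGroup α, wordLen (u * v) = wordLen u + wordLen v →
      wordLen (f u) + wordLen (f v) ≤ wordLen (f (u * v)) + C)
    {s W : FreeGroup α} (hs : IsSubword s W) (hC : C ≤ wordLen (f s)) :
    ∃ x m y, f s = x * m * y ∧ wordLen (f s) = wordLen x + wordLen m + wordLen y ∧
      2 * wordLen x ≤ C ∧ 2 * wordLen y ≤ C ∧ IsSubword m (f W) := by
  obtain ⟨u, v, rfl, hW⟩ := hs
  obtain ⟨hus, husv⟩ : wordLen (u * s) = wordLen u + wordLen s ∧
      wordLen (u * s * v) = wordLen (u * s) + wordLen v := by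
    have := wordLen_mul_le u s
    have := wordLen_mul_le (u * s) v
    omega
  obtain ⟨p₁, t₁, q₁, -, hs₁, hus₁, ht₁⟩ := exists_toWord_mul_of_add_le (x := f u) (y := f s)
    (by rw [← _root_.map_mul]; exact hbc u s hus)
  obtain ⟨P, t₂, q₂, hP, -, hW₂, ht₂⟩ := exists_toWord_mul_of_add_le (x := f (u * s)) (y := f v)
    (hbc (u * s) v husv |>.trans_eq (by rw [_root_.map_mul]))
  rw [_root_.map_mul] at hP
  rw [← _root_.map_mul] at hW₂
  -- `f s` loses at most `C / 2` letters at each end, and `C ≤ |f s|` keeps the two ends apart.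
  have hlen : t₂.length ≤ q₁.length := by
    simp only [wordLen, hs₁, List.length_append, invRev_length] at hC
    omega
  obtain ⟨m, rfl, rfl⟩ := List.exists_eq_append_of_append_eq_append (hus₁.symm.trans hP) hlen
  rw [← List.append_assoc] at hs₁
  refine ⟨mk (invRev t₁), mk m, mk t₂, eq_mk_mul_mk_mul_mk_of_toWord_eq hs₁,
    wordLen_eq_of_toWord_eq hs₁, ?_, ?_, isSubword_mk_of_toWord_eq hW₂⟩
  · rwa [wordLen_mk_of_infix (x := f s) ⟨[], m ++ t₂, by simp [hs₁]⟩, invRev_length]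
  · rwa [wordLen_mk_of_infix (x := f s) ⟨invRev t₁ ++ m, [], by simp [hs₁]⟩]

end WordLength

theorem mul_div_sub_one_sub_self {lam : ℝ} (hlam : lam ≠ 1) (c : ℝ) :
    lam * (c / (lam - 1)) - c = c / (lam - 1) := by
  field_simp [sub_ne_zero.mpr hlam]
  ring

theorem tendsto_atTop_of_pow_mul_le {u : ℕ → ℝ} {lam d : ℝ} (hlam : 1 < lam) (hd : 0 < d) (k : ℕ)
    (h : ∀ m, lam ^ m * d ≤ u (k + m)) : Tendsto u atTop atTop := by
  refine tendsto_atTop_mono' atTop ?_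
    (((tendsto_pow_atTop_atTop_of_one_lt hlam).comp (tendsto_sub_atTop_nat k)).atTop_mul_const hd)
  filter_upwards [eventually_ge_atTop k] with n hn
  simpa [Nat.add_sub_cancel' hn] using h (n - k)

section Expanding

variable {α : Type*} [DecidableEq α] {C : ℕ} {lam : ℝ} {S : Set (FreeGroup α)}

theorem IsSubword.exists_mem_map {F : Type*} [FunLike F (FreeGroup α) (FreeGroup α)]
    [MonoidHomClass F (FreeGroup α) (FreeGroup α)] (f : F)
    (hbc : ∀ u v : FreeGroup α, wordLen (u * v) = wordLen u + wordLen v →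
      wordLen (f u) + wordLen (f v) ≤ wordLen (f (u * v)) + C)
    (hlam : 1 < lam)
    (hSclosed : ∀ s ∈ S, ∀ u m v : FreeGroup α,
      f s = u * m * v → wordLen (f s) = wordLen u + wordLen m + wordLen v →
      wordLen u ≤ C → wordLen v ≤ C → m ∈ S)
    (hSexp : ∀ s ∈ S, lam * (wordLen s : ℝ) ≤ (wordLen (f s) : ℝ))
    {s W : FreeGroup α} (hsub : IsSubword s W) (hs : s ∈ S)
    (hlong : C / (lam - 1) ≤ (wordLen s : ℝ)) :
    ∃ s' ∈ S, IsSubword s' (f W) ∧ lam * (wordLen s : ℝ) - C ≤ (wordLen s' : ℝ) := by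
  have hC : C ≤ wordLen (f s) := by
    have hcrit : 0 ≤ (C : ℝ) / (lam - 1) := div_nonneg C.cast_nonneg (by linarith)
    have hfix := mul_div_sub_one_sub_self hlam.ne' C
    have hmul : lam * (C / (lam - 1)) ≤ lam * (wordLen s : ℝ) := by gcongr
    exact_mod_cast (show (C : ℝ) ≤ wordLen (f s) by linarith [hSexp s hs])
  obtain ⟨x, m, y, hfs, hlen, hx, hy, hm⟩ := hsub.exists_middle_map f hbc hC
  refine ⟨m, hSclosed s hs x m y hfs hlen (by omega) (by omega), hm, ?_⟩
  have hm_len : (wordLen (f s) : ℝ) ≤ wordLen m + C := by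
    exact_mod_cast (by omega : wordLen (f s) ≤ wordLen m + C)
  linarith [hSexp s hs]

theorem IsSubword.exists_mem_pow_apply (φ : MulAut (FreeGroup α))
    (hbc : ∀ u v : FreeGroup α, wordLen (u * v) = wordLen u + wordLen v →
      wordLen (φ u) + wordLen (φ v) ≤ wordLen (φ (u * v)) + C)
    (hlam : 1 < lam)
    (hSclosed : ∀ s ∈ S, ∀ u m v : FreeGroup α,
      φ s = u * m * v → wordLen (φ s) = wordLen u + wordLen m + wordLen v →
      wordLen u ≤ C → wordLen v ≤ C → m ∈ S)
    (hSexp : ∀ s ∈ S, lam * (wordLen s : ℝ) ≤ (wordLen (φ s) : ℝ))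
    {β W : FreeGroup α} (hsub : IsSubword β W) (hβ : β ∈ S)
    (hlong : C / (lam - 1) ≤ (wordLen β : ℝ)) (m : ℕ) :
    ∃ s ∈ S, IsSubword s ((φ ^ m) W) ∧
      lam ^ m * ((wordLen β : ℝ) - C / (lam - 1)) + C / (lam - 1) ≤ (wordLen s : ℝ) := by
  induction m with
  | zero => exact ⟨β, hβ, hsub, by simp⟩
  | succ m ih =>
    obtain ⟨s, hs, hsub, hbound⟩ := ih
    have hpow : 0 ≤ lam ^ m * ((wordLen β : ℝ) - C / (lam - 1)) :=
      mul_nonneg (pow_nonneg (by linarith) m) (by linarith)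
    obtain ⟨s', hs', hsub', hlen'⟩ :=
      hsub.exists_mem_map φ hbc hlam hSclosed hSexp hs (by linarith)
    refine ⟨s', hs', by rwa [pow_succ', MulAut.mul_apply], ?_⟩
    calc lam ^ (m + 1) * ((wordLen β : ℝ) - C / (lam - 1)) + C / (lam - 1)
        = lam * (lam ^ m * ((wordLen β : ℝ) - C / (lam - 1)) + C / (lam - 1)) - C := by
          rw [pow_succ', mul_add, mul_assoc]
          linarith [mul_div_sub_one_sub_self hlam.ne' C]
      _ ≤ lam * (wordLen s : ℝ) - C := by gcongr
      _ ≤ wordLen s' := hlen'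

end Expanding

theorem stmt13 {X : Type*} [DecidableEq X] (φ : MulAut (FreeGroup X)) (C : ℕ)
    (hbc : ∀ u v : FreeGroup X, wordLen (u * v) = wordLen u + wordLen v →
      (wordLen (φ u) : ℝ) + (wordLen (φ v) : ℝ) - C ≤ (wordLen (φ (u * v)) : ℝ))
    (lam : ℝ) (hlam : 1 < lam)
    (S : Set (FreeGroup X))
    -- S is closed under "apply φ and delete at most C letters from each end":
    (hSclosed : ∀ s ∈ S, ∀ u m v : FreeGroup X,
      φ s = u * m * v → wordLen (φ s) = wordLen u + wordLen m + wordLen v →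
      wordLen u ≤ C → wordLen v ≤ C → m ∈ S)
    (hSexp : ∀ s ∈ S, lam * (wordLen s : ℝ) ≤ (wordLen (φ s) : ℝ))
    (w : FreeGroup X) (k : ℕ) (β : FreeGroup X)
    (hβsub : IsSubword β ((φ ^ k) w)) (hβS : β ∈ S)
    (hβlong : 2 * C / (lam - 1) < (wordLen β : ℝ)) :
    (∀ m : ℕ, lam ^ m * ((wordLen β : ℝ) - 2 * C / (lam - 1)) ≤
      (wordLen ((φ ^ (k + m)) w) : ℝ)) ∧
    Tendsto (fun n : ℕ => (wordLen ((φ ^ n) w) : ℝ)) atTop atTop := by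
  have hbcNat : ∀ u v : FreeGroup X, wordLen (u * v) = wordLen u + wordLen v →
      wordLen (φ u) + wordLen (φ v) ≤ wordLen (φ (u * v)) + C := fun u v huv ↦ by
    exact_mod_cast (by linarith [hbc u v huv] :
      (wordLen (φ u) : ℝ) + wordLen (φ v) ≤ wordLen (φ (u * v)) + C)
  have hcrit : 0 ≤ (C : ℝ) / (lam - 1) := div_nonneg C.cast_nonneg (by linarith)
  have hcrit₂ : 2 * (C : ℝ) / (lam - 1) = 2 * (C / (lam - 1)) := mul_div_assoc _ _ _
  have hgrowth : ∀ m : ℕ, lam ^ m * ((wordLen β : ℝ) - 2 * C / (lam - 1)) ≤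
      (wordLen ((φ ^ (k + m)) w) : ℝ) := by
    intro m
    obtain ⟨s, -, hsub, hbound⟩ := hβsub.exists_mem_pow_apply φ hbcNat hlam hSclosed hSexp hβS
      (by linarith) m
    have hs : (wordLen s : ℝ) ≤ wordLen ((φ ^ (k + m)) w) := by
      rw [add_comm, pow_add, MulAut.mul_apply]
      exact_mod_cast hsub.wordLen_le
    have hpow : 0 ≤ lam ^ m := pow_nonneg (by linarith) m
    rw [hcrit₂]
    nlinarith [mul_nonneg hpow hcrit]
  exact ⟨hgrowth, tendsto_atTop_of_pow_mul_le hlam (by linarith) k hgrowth⟩
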